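/- Let O and O' be sets on which Sym(Ω) acts, let π : Stacks(O) → Stacks(O') be an injective Sym(Ω)-invariant function, and let U ⊆ Sym(Ω). If U has a perfect refiner with respect to O, then U also has a perfect refiner with respect to O'. -/

import Mathlib

/-- A right action of a group `G` on a type `O`, written exponentially in the paper:
`act o g` is `o ^ g`. -/
structure RAct (G : Type*) [Group G] (O : Type*) where
  act : O → G → O
  act_one : ∀ o : O, act o 1 = o
  act_mul : ∀ (o : O) (g h : G), act o (g * h) = act (act o g) h

namespace RAct

variable {G : Type*} [Group G] {O : Type*}

/-- The induced entrywise right action on stacks (finite lists) with entries in `O`. -/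
def stack (a : RAct G O) : RAct G (List O) where
  act S g := S.map fun o => a.act o g
  act_one S := by
    have h : (fun o => a.act o 1) = id := funext fun o => a.act_one o
    simp [h]
  act_mul S g h := by
    show List.map (fun o => a.act o (g * h)) S = List.map (fun o => a.act o h) (List.map (fun o => a.act o g) S)
    rw [List.map_map]
    refine List.map_congr_left fun o _ => ?_
    exact a.act_mul o g h

/-- The transporter set `Iso(x, y) = {g : x ^ g = y}`. -/
def iso {X : Type*} (b : RAct G X) (x y : X) : Set G := {g | b.act x g = y}

/-- A refiner for `U`: a pair of functions on stacks with
`U ∩ Iso(S, T) ⊆ Iso(f_L S, f_R T)` for all stacks `S`, `T`. -/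
def IsRefiner (a : RAct G O) (U : Set G) (fL fR : List O → List O) : Prop :=
  ∀ S T : List O, U ∩ a.stack.iso S T ⊆ a.stack.iso (fL S) (fR T)

/-- A perfect refiner for `U`: a refiner such that
`U ∩ Iso(S, T) = Iso(S ‖ f_L S, T ‖ f_R T)` whenever `|S| = |T|`. -/
def IsPerfectRefiner (a : RAct G O) (U : Set G) (fL fR : List O → List O) : Prop :=
  IsRefiner a U fL fR ∧
    ∀ S T : List O, S.length = T.length →
      U ∩ a.stack.iso S T = a.stack.iso (S ++ fL S) (T ++ fR T)

/-- The action of `x ∈ G` on functions on stacks: `f ^ x (S) = (f (S ^ x⁻¹)) ^ x`. -/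
def conj (a : RAct G O) (f : List O → List O) (x : G) : List O → List O :=
  fun S => a.stack.act (f (a.stack.act S x⁻¹)) x

/-- The combination `f ‖ g` of two functions on stacks: `(f ‖ g)(S) = f S ‖ g S`. -/
def comb (f g : List O → List O) : List O → List O := fun S => f S ++ g S

end RAct

/-!
Taking `S = T = []` in the defining identity of a perfect refiner shows that `U` is a transporter
set `Iso(A, B)` of two stacks; conversely the constant pair `(A, B)` is a perfect refiner for
`Iso(A, B)`, since `Iso(S ‖ A, T ‖ B) = Iso(S, T) ∩ Iso(A, B)` when `|S| = |T|`. An injective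
invariant `π` turns `Iso(A, B)` into `Iso(π A, π B)`.
-/

namespace RAct

variable {G : Type*} [Group G] {O : Type*}

theorem iso_eq_of_injective_of_equivariant {X Y : Type*} (b : RAct G X) (b' : RAct G Y)
    {π : X → Y} (hinj : Function.Injective π) (hπ : ∀ x g, π (b.act x g) = b'.act (π x) g)
    (x y : X) : b'.iso (π x) (π y) = b.iso x y := by
  ext g
  simp only [iso, Set.mem_ofPred_eq, ← hπ, hinj.eq_iff]

theorem stack_act_append (a : RAct G O) (S T : List O) (g : G) :
    a.stack.act (S ++ T) g = a.stack.act S g ++ a.stack.act T g :=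
  List.map_append

theorem length_stack_act (a : RAct G O) (S : List O) (g : G) :
    (a.stack.act S g).length = S.length :=
  List.length_map _

theorem stack_iso_nil (a : RAct G O) : a.stack.iso [] [] = Set.univ :=
  Set.eq_univ_of_forall fun _ => rfl

theorem stack_iso_append (a : RAct G O) {S T : List O} (h : S.length = T.length)
    (A B : List O) : a.stack.iso (S ++ A) (T ++ B) = a.stack.iso S T ∩ a.stack.iso A B := by
  ext g
  have hlen : (a.stack.act S g).length = T.length := (a.length_stack_act S g).trans h
  simp only [iso, Set.mem_ofPred_eq, Set.mem_inter_iff, stack_act_append]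
  exact ⟨fun he => List.append_inj he hlen, fun ⟨h₁, h₂⟩ => h₁ ▸ h₂ ▸ rfl⟩

theorem IsPerfectRefiner.eq_stack_iso {a : RAct G O} {U : Set G} {fL fR : List O → List O}
    (h : a.IsPerfectRefiner U fL fR) : U = a.stack.iso (fL []) (fR []) := by
  simpa [stack_iso_nil] using h.2 [] [] rfl

theorem isPerfectRefiner_const (a : RAct G O) (A B : List O) :
    a.IsPerfectRefiner (a.stack.iso A B) (fun _ => A) (fun _ => B) :=
  ⟨fun _ _ => Set.inter_subset_left,
    fun _ _ hST => by rw [stack_iso_append a hST, Set.inter_comm]⟩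

theorem exists_isPerfectRefiner_iff (a : RAct G O) (U : Set G) :
    (∃ fL fR : List O → List O, a.IsPerfectRefiner U fL fR) ↔
      ∃ A B : List O, U = a.stack.iso A B :=
  ⟨fun ⟨fL, fR, h⟩ => ⟨fL [], fR [], h.eq_stack_iso⟩,
    fun ⟨A, B, hU⟩ => ⟨fun _ => A, fun _ => B, hU ▸ a.isPerfectRefiner_const A B⟩⟩

end RAct

theorem stmt14_general {Ω : Type*} {O O' : Type*}
    (a : RAct (Equiv.Perm Ω) O) (a' : RAct (Equiv.Perm Ω) O')
    (π : List O → List O') (hinj : Function.Injective π)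
    (hπ : ∀ (S : List O) (g : Equiv.Perm Ω), π (a.stack.act S g) = a'.stack.act (π S) g)
    (U : Set (Equiv.Perm Ω))
    (h : ∃ fL fR : List O → List O, a.IsPerfectRefiner U fL fR) :
    ∃ fL fR : List O' → List O', a'.IsPerfectRefiner U fL fR := by
  obtain ⟨A, B, rfl⟩ := (a.exists_isPerfectRefiner_iff U).1 h
  exact (a'.exists_isPerfectRefiner_iff _).2
    ⟨π A, π B, (RAct.iso_eq_of_injective_of_equivariant _ _ hinj hπ A B).symm⟩

/-- If `π : Stacks(O) → Stacks(O')` is an injective `Sym Ω`-invariant function and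
`U ⊆ Sym Ω` has a perfect refiner with respect to `O`, then `U` has a perfect refiner
with respect to `O'`. -/
theorem stmt14 {Ω : Type*} [Fintype Ω] [Nonempty Ω] {O O' : Type*}
    (a : RAct (Equiv.Perm Ω) O) (a' : RAct (Equiv.Perm Ω) O')
    (π : List O → List O') (hinj : Function.Injective π)
    (hπ : ∀ (S : List O) (g : Equiv.Perm Ω), π (a.stack.act S g) = a'.stack.act (π S) g)
    (U : Set (Equiv.Perm Ω))
    (h : ∃ fL fR : List O → List O, a.IsPerfectRefiner U fL fR) :
    ∃ fL fR : List O' → List O', a'.IsPerfectRefiner U fL fR :=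
  stmt14_general a a' π hinj hπ U h
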